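/- Over {a<b<c}, for every k ≥ 1 and α, β, γ, δ, ν, ζ with k ≤ min{α, β, ζ}, the words a b^α c b^β a b^γ c b^δ a b^ν c b^ζ a and b^k a b^{α-k} c b^{β-k} a b^γ c b^{δ+k} a b^{ν+k} c b^{ζ-k} a are M-equivalent. -/

import Mathlib

open List

/-- Number of occurrences of `v` as a scattered subsequence of `w`. -/
def scount {α : Type*} [DecidableEq α] (w v : List α) : ℕ := w.sublists.count v

/-- The ternary ordered alphabet {a < b < c}. -/
inductive ABC | a | b | c
deriving DecidableEq

open ABC

/-- M-equivalence over the ordered alphabet {a < b < c}. -/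
def MEq3 (w w' : List ABC) : Prop :=
  scount w [a] = scount w' [a] ∧ scount w [b] = scount w' [b] ∧
  scount w [c] = scount w' [c] ∧ scount w [a, b] = scount w' [a, b] ∧
  scount w [b, c] = scount w' [b, c] ∧ scount w [a, b, c] = scount w' [a, b, c]

/-- Projection onto {a, c}: erase all b's. -/
def projAC (w : List ABC) : List ABC := w.filter (· ≠ b)

abbrev A (k : ℕ) : List ABC := List.replicate k a
abbrev B (k : ℕ) : List ABC := List.replicate k b
abbrev C (k : ℕ) : List ABC := List.replicate k c

/-!
Both words have the same a/c skeleton `acacaca`, so only the counts involving `b` can differ.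
A `b` preceded by `i` letters `a` and followed by `j` letters `c` contributes `1, i, j, i * j`
to `|w|_b, |w|_ab, |w|_bc, |w|_abc`. Moving `k` letters `b` out of the blocks with `(i, j)` equal to
`(1, 3), (1, 2), (3, 0)` into the blocks with `(0, 3), (2, 1), (3, 1)` changes each of these
weighted sums by `k` times `(0 + 2 + 3) - (1 + 1 + 3) = 0`, `(3 + 1 + 1) - (3 + 2 + 0) = 0` and
`(0 + 2 + 3) - (3 + 2 + 0) = 0`.
-/

section

variable {σ : Type*} [DecidableEq σ]

theorem scount_cons (e : σ) (w p : List σ) :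
    scount (e :: w) p = scount w p + (w.sublists.map (cons e)).count p := by
  rw [scount, scount, (sublists_cons_perm_append e w).count_eq, count_append]

@[simp]
theorem scount_nil_right (w : List σ) : scount w [] = 1 := by
  induction w with
  | nil => rfl
  | cons e w ih => rw [scount_cons, ih, count_eq_zero.2 (by simp)]

@[simp]
theorem scount_nil_cons (x : σ) (s : List σ) : scount [] (x :: s) = 0 := by
  simp [scount]

@[simp]
theorem scount_cons_cons (e : σ) (w : List σ) (x : σ) (s : List σ) :
    scount (e :: w) (x :: s) = scount w (x :: s) + if e = x then scount w s else 0 := by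
  rw [scount_cons]
  split_ifs with h
  · rw [h, count_map_of_injective _ _ cons_injective]; rfl
  · rw [count_eq_zero.2 (by simp [h])]

theorem scount_append (u v p : List σ) :
    scount (u ++ v) p =
      ∑ i ∈ Finset.range (p.length + 1), scount u (p.take i) * scount v (p.drop i) := by
  induction u generalizing p with
  | nil =>
    rw [Finset.sum_range_succ']
    cases p <;> simp
  | cons e u ih =>
    cases p with
    | nil => simp
    | cons x s =>
      rw [cons_append, scount_cons_cons, ih, ih, length_cons,
        Finset.sum_range_succ' _ (s.length + 1),
        Finset.sum_range_succ' (fun i => scount (e :: u) _ * _)]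
      simp only [take_succ_cons, drop_succ_cons, take_zero, drop_zero, scount_cons_cons, add_mul,
        Finset.sum_add_distrib, ite_mul, zero_mul, Finset.sum_ite_irrel, Finset.sum_const_zero,
        scount_nil_right]
      ring

theorem scount_append_singleton (u v : List σ) (x : σ) :
    scount (u ++ v) [x] = scount u [x] + scount v [x] := by
  simp [scount_append, Finset.sum_range_succ, add_comm]

theorem scount_append_pair (u v : List σ) (x y : σ) :
    scount (u ++ v) [x, y] = scount u [x, y] + scount u [x] * scount v [y] + scount v [x, y] := by
  simp [scount_append, Finset.sum_range_succ, add_comm, add_left_comm]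

theorem scount_append_triple (u v : List σ) (x y z : σ) :
    scount (u ++ v) [x, y, z] = scount u [x, y, z] + scount u [x, y] * scount v [z] +
      scount u [x] * scount v [y, z] + scount v [x, y, z] := by
  simp [scount_append, Finset.sum_range_succ, add_comm, add_left_comm]

theorem scount_replicate (e : σ) (n : ℕ) (p : List σ) :
    scount (replicate n e) p = if ∀ x ∈ p, x = e then n.choose p.length else 0 := by
  induction n generalizing p with
  | zero => cases p <;> simp
  | succ n ih =>
    cases p with
    | nil => simp
    | cons x s =>
      rw [replicate_succ, scount_cons_cons, ih, ih]
      by_cases hx : x = e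
      · subst hx
        simp only [forall_mem_cons, true_and, if_true, length_cons]
        split_ifs
        · rw [Nat.choose_succ_succ', add_comm]
        · simp
      · simp [hx, Ne.symm hx]

end

theorem stmt_13_general (k α β γ δ ν ζ : ℕ)
    (hkα : k ≤ α) (hkβ : k ≤ β) (hkζ : k ≤ ζ) :
    MEq3 ([a] ++ B α ++ [c] ++ B β ++ [a] ++ B γ ++ [c] ++ B δ ++ [a] ++ B ν ++ [c] ++ B ζ ++ [a])
      (B k ++ [a] ++ B (α - k) ++ [c] ++ B (β - k) ++ [a] ++ B γ ++ [c] ++ B (δ + k) ++ [a] ++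
        B (ν + k) ++ [c] ++ B (ζ - k) ++ [a]) := by
  obtain ⟨α, rfl⟩ := Nat.exists_eq_add_of_le hkα
  obtain ⟨β, rfl⟩ := Nat.exists_eq_add_of_le hkβ
  obtain ⟨ζ, rfl⟩ := Nat.exists_eq_add_of_le hkζ
  simp only [Nat.add_sub_cancel_left]
  refine ⟨?_, ?_, ?_, ?_, ?_, ?_⟩ <;>
    simp [B, scount_append_singleton, scount_append_pair, scount_append_triple,
      scount_replicate] <;> ring

theorem stmt_13 (k α β γ δ ν ζ : ℕ)
    (hk : 1 ≤ k) (hkα : k ≤ α) (hkβ : k ≤ β) (hkζ : k ≤ ζ) :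
    MEq3 ([a] ++ B α ++ [c] ++ B β ++ [a] ++ B γ ++ [c] ++ B δ ++ [a] ++ B ν ++ [c] ++ B ζ ++ [a])
      (B k ++ [a] ++ B (α - k) ++ [c] ++ B (β - k) ++ [a] ++ B γ ++ [c] ++ B (δ + k) ++ [a] ++
        B (ν + k) ++ [c] ++ B (ζ - k) ++ [a]) :=
  stmt_13_general k α β γ δ ν ζ hkα hkβ hkζ
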